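/- arXiv:1105.1033 — 2 statements merged into one kernel-verified Lean document; each statement's English description precedes it below -/
import Mathlib

section
/- Any finite tree metric on the set of leaves of a tree with ℓ leaves embeds isometrically, after taking square roots of distances, into ℝ^ℓ: there exist points x_1, ..., x_ℓ ∈ ℝ^ℓ such that ‖x_i - x_j‖² equals the tree distance d_T(i, j) between leaves i and j. -/
/-!
Root the tree at `r` and send a vertex `v` to the vector of `ℝ^E` whose coordinate at an edge `e`
is `√(w e)` if `e` lies on the path from `r` to `v`, and `0` otherwise. The path from `u` to `v`
consists of exactly the edges lying on one but not both of the root paths to `u` and `v`, so the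
squared distance of the images of `u` and `v` is `d_T(u, v)`. Finally, `ℓ` points of an inner
product space span a subspace of dimension at most `ℓ`, which embeds isometrically in `ℝ^ℓ`.
-/

open Module

theorem exists_linearIsometry_euclideanSpace_of_finrank_le {𝕜 K : Type*} [RCLike 𝕜]
    [NormedAddCommGroup K] [InnerProductSpace 𝕜 K] [FiniteDimensional 𝕜 K] {n : ℕ}
    (h : finrank 𝕜 K ≤ n) : Nonempty (K →ₗᵢ[𝕜] EuclideanSpace 𝕜 (Fin n)) := by
  let b := stdOrthonormalBasis 𝕜 K
  let e : Fin (finrank 𝕜 K) → EuclideanSpace 𝕜 (Fin n) :=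
    fun j => EuclideanSpace.single (Fin.castLE h j) 1
  have he : Orthonormal 𝕜 e := by
    simpa [Function.comp_def] using
      (EuclideanSpace.basisFun (Fin n) 𝕜).orthonormal.comp _ (Fin.castLE_injective h)
  have hb : ⇑(b.toBasis.constr 𝕜 e) ∘ ⇑b.toBasis = e :=
    funext (b.toBasis.constr_basis 𝕜 e)
  exact ⟨(b.toBasis.constr 𝕜 e).isometryOfOrthonormal b.orthonormal (hb ▸ he)⟩

theorem exists_euclideanSpace_norm_sub_eq {ι E : Type*} [Fintype ι] [NormedAddCommGroup E]
    [InnerProductSpace ℝ E] (z : ι → E) {n : ℕ} (hn : Fintype.card ι ≤ n) :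
    ∃ x : ι → EuclideanSpace ℝ (Fin n), ∀ i j, ‖x i - x j‖ = ‖z i - z j‖ := by
  let K := Submodule.span ℝ (Set.range z)
  have : FiniteDimensional ℝ K := .span_of_finite ℝ (Set.finite_range z)
  obtain ⟨f⟩ := exists_linearIsometry_euclideanSpace_of_finrank_le (K := K)
    ((finrank_range_le_card z).trans hn)
  let zK : ι → K := fun i => ⟨z i, Submodule.subset_span (Set.mem_range_self i)⟩
  exact ⟨fun i => f (zK i), fun i j => by rw [← map_sub, f.norm_map]; rfl⟩

theorem EuclideanSpace.norm_sub_sq_sqrt_indicator {α : Type*} [Fintype α] [DecidableEq α]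
    {w : α → ℝ} (hw : ∀ a, 0 ≤ w a) (s t : Finset α) :
    ‖WithLp.toLp 2 (fun a => if a ∈ s then √(w a) else 0) -
        WithLp.toLp 2 (fun a => if a ∈ t then √(w a) else 0)‖ ^ 2 =
      ∑ a ∈ symmDiff s t, w a := by
  have hterm (a : α) :
      ‖(if a ∈ s then √(w a) else 0) - (if a ∈ t then √(w a) else 0)‖ ^ 2 =
        if a ∈ symmDiff s t then w a else 0 := by
    by_cases hs : a ∈ s <;> by_cases ht : a ∈ t <;> simp [hs, ht, Finset.mem_symmDiff, hw a]
  rw [EuclideanSpace.norm_sq_eq]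
  simp only [PiLp.sub_apply, hterm, Finset.sum_ite_mem, Finset.univ_inter]

namespace SimpleGraph

variable {V : Type*} {G : SimpleGraph V}

theorem IsAcyclic.eq_concat_or_eq_concat (hG : G.IsAcyclic) {r u w : V}
    {p : G.Walk r u} {q : G.Walk r w} (hp : p.IsPath) (hq : q.IsPath) (h : G.Adj u w) :
    q = p.concat h ∨ p = q.concat h.symm := by
  by_cases hu : u ∈ q.support
  · exact .inl (hG.path_concat hp hq h hu)
  · exact .inr <| Subtype.mk.inj <|
      (hG.subsingleton_path r u).elim ⟨p, hp⟩ ⟨_, hq.concat hu h.symm⟩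

variable {r : V} {P : ∀ v, G.Walk r v}

theorem IsAcyclic.mem_edges_iff_xor_of_adj (hG : G.IsAcyclic) (hP : ∀ v, (P v).IsPath)
    {u w : V} (h : G.Adj u w) (e : Sym2 V) :
    e = s(u, w) ↔ Xor (e ∈ (P u).edges) (e ∈ (P w).edges) := by
  rcases hG.eq_concat_or_eq_concat (hP u) (hP w) h with hw | hu
  · have hnd := (hP w).isTrail.edges_nodup
    rw [hw, Walk.edges_concat, List.nodup_concat] at hnd
    rw [hw, Walk.edges_concat, List.concat_eq_append]
    by_cases he : e = s(u, w) <;> simp_all [Xor]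
  · have hnd := (hP u).isTrail.edges_nodup
    rw [hu, Walk.edges_concat, List.nodup_concat] at hnd
    rw [hu, Walk.edges_concat, List.concat_eq_append, Sym2.eq_swap]
    by_cases he : e = s(w, u) <;> simp_all [Xor]

theorem IsAcyclic.mem_edges_iff_xor (hG : G.IsAcyclic) (hP : ∀ v, (P v).IsPath)
    {u v : V} {p : G.Walk u v} (hp : p.IsPath) (e : Sym2 V) :
    e ∈ p.edges ↔ Xor (e ∈ (P u).edges) (e ∈ (P v).edges) := by
  induction p with
  | nil => simp [Xor]
  | @cons u w v h q ih =>
    have hnd := hp.isTrail.edges_nodup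
    rw [Walk.edges_cons, List.nodup_cons] at hnd
    have hq := ih hp.of_cons
    have hstep := hG.mem_edges_iff_xor_of_adj hP h e
    rw [Walk.edges_cons, List.mem_cons]
    grind [Xor]

theorem IsAcyclic.toFinset_edges_eq_symmDiff [DecidableEq V] (hG : G.IsAcyclic)
    (hP : ∀ v, (P v).IsPath) {u v : V} {p : G.Walk u v} (hp : p.IsPath) :
    p.edges.toFinset = symmDiff (P u).edges.toFinset (P v).edges.toFinset := by
  ext e
  simp [Finset.mem_symmDiff, hG.mem_edges_iff_xor hP hp e, Xor]

end SimpleGraph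

theorem tree_metric_embeds_general {V : Type*} [Fintype V]
    (G : SimpleGraph V) [DecidableRel G.Adj] (hG : G.IsTree)
    (weight : Sym2 V → ℝ) (hweight : ∀ e, 0 ≤ weight e)
    (dT : V → V → ℝ)
    (hdT : ∀ u v : V, ∀ p : G.Walk u v, p.IsPath → dT u v = (p.edges.map weight).sum)
    (ℓ : ℕ) (hℓ : Fintype.card {v : V // G.degree v = 1} = ℓ) :
    ∃ x : {v : V // G.degree v = 1} → EuclideanSpace ℝ (Fin ℓ),
      ∀ i j, ‖x i - x j‖ ^ 2 = dT i.1 j.1 := by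
  classical
  obtain ⟨r⟩ := hG.connected.nonempty
  choose P hP using fun v => (hG.existsUnique_path r v).exists
  let y : V → EuclideanSpace ℝ (Sym2 V) := fun v =>
    WithLp.toLp 2 (fun e => if e ∈ (P v).edges.toFinset then √(weight e) else 0)
  have hy (u v : V) : ‖y u - y v‖ ^ 2 = dT u v := by
    obtain ⟨p, hp, -⟩ := hG.existsUnique_path u v
    rw [hdT u v p hp, EuclideanSpace.norm_sub_sq_sqrt_indicator hweight,
      ← hG.isAcyclic.toFinset_edges_eq_symmDiff hP hp,
      List.sum_toFinset _ hp.isTrail.edges_nodup]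
  obtain ⟨x, hx⟩ :=
    exists_euclideanSpace_norm_sub_eq (fun i : {v // G.degree v = 1} => y i) hℓ.le
  exact ⟨x, fun i j => by rw [hx, hy]⟩

/-- Any tree metric on the `ℓ` leaves of a tree embeds into `ℝ^ℓ` with squared
Euclidean distance equal to the tree distance. -/
theorem tree_metric_embeds {V : Type*} [Fintype V] [DecidableEq V]
    (G : SimpleGraph V) [DecidableRel G.Adj] (hG : G.IsTree)
    (weight : Sym2 V → ℝ) (hweight : ∀ e, 0 ≤ weight e)
    (dT : V → V → ℝ)
    (hdT : ∀ u v : V, ∀ p : G.Walk u v, p.IsPath → dT u v = (p.edges.map weight).sum)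
    (ℓ : ℕ) (hℓ : Fintype.card {v : V // G.degree v = 1} = ℓ) :
    ∃ x : {v : V // G.degree v = 1} → EuclideanSpace ℝ (Fin ℓ),
      ∀ i j, ‖x i - x j‖ ^ 2 = dT i.1 j.1 :=
  tree_metric_embeds_general G hG weight hweight dT hdT ℓ hℓ
end

section
/- In the setting of relative regression, with ∇_t the gradient of the log loss at w_t on example (x_t, x_t', y_t) where Pr[y_t = 1] = p_t(w*), one has E[∇_t · w*] (expectation over y_t) equal to the negative quantity -Z_t (p_t(w*) - p_t(w_t))² where Z_t = ((w_t·x_t + w_t·x_t')(w*·x_t + w*·x_t'))/((w_t·x_t)(w_t·x_t')); equivalently E[∇_t·(w_t - w*)] = Z_t (p_t(w*) - p_t(w_t))² ≥ 0. -/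
/-!
The gradient of the relative log loss at `w` is orthogonal to `w`, so `E[∇ · (w - w*)] = -E[∇ · w*]`.
Writing `a, b` and `c, e` for the inner products of `w` and `w*` with `x, x'`, and
`p = a / (a + b)`, `q = c / (c + e)`, the expectation `E[∇ · w*]` is
`((c + e) / (a + b)) (1 - q² / p - (1 - q)² / (1 - p))`, and the bracket is minus the
χ²-divergence `(q - p)² / (p (1 - p))` of the Bernoulli laws `q` and `p`.
-/

open scoped RealInnerProductSpace

section RelativeRegression

variable {E : Type*} [NormedAddCommGroup E] [InnerProductSpace ℝ E]

noncomputable def relProb (w x x' : E) : ℝ := ⟪w, x⟫ / (⟪w, x⟫ + ⟪w, x'⟫)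

noncomputable def relLogLossGrad (w x x' : E) (y : Bool) : E :=
  (⟪w, x⟫ + ⟪w, x'⟫)⁻¹ • (x + x') - if y then (⟪w, x⟫)⁻¹ • x else (⟪w, x'⟫)⁻¹ • x'

/-- The weight `Z` of the paper. -/
noncomputable def relWeight (w w' x x' : E) : ℝ :=
  (⟪w, x⟫ + ⟪w, x'⟫) * (⟪w', x⟫ + ⟪w', x'⟫) / (⟪w, x⟫ * ⟪w, x'⟫)

theorem inner_relLogLossGrad (w x x' v : E) (y : Bool) :
    ⟪relLogLossGrad w x x' y, v⟫ = (⟪v, x⟫ + ⟪v, x'⟫) / (⟪w, x⟫ + ⟪w, x'⟫) -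
      if y then ⟪v, x⟫ / ⟪w, x⟫ else ⟪v, x'⟫ / ⟪w, x'⟫ := by
  rw [real_inner_comm]
  cases y <;>
    simp [relLogLossGrad, inner_sub_right, inner_add_right, real_inner_smul_right,
      div_eq_inv_mul, mul_add]

theorem inner_relLogLossGrad_self {w x x' : E} (hx : ⟪w, x⟫ ≠ 0) (hx' : ⟪w, x'⟫ ≠ 0)
    (hsum : ⟪w, x⟫ + ⟪w, x'⟫ ≠ 0) (y : Bool) : ⟪relLogLossGrad w x x' y, w⟫ = 0 := by
  cases y <;> simp [inner_relLogLossGrad, div_self hsum, div_self hx, div_self hx']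

theorem relWeight_nonneg {w w' x x' : E} (hx : 0 < ⟪w, x⟫) (hx' : 0 < ⟪w, x'⟫)
    (hsum' : 0 ≤ ⟪w', x⟫ + ⟪w', x'⟫) : 0 ≤ relWeight w w' x x' := by
  unfold relWeight
  positivity

theorem expected_inner_relLogLossGrad {w w' x x' : E} (hx : ⟪w, x⟫ ≠ 0) (hx' : ⟪w, x'⟫ ≠ 0)
    (hsum : ⟪w, x⟫ + ⟪w, x'⟫ ≠ 0) (hsum' : ⟪w', x⟫ + ⟪w', x'⟫ ≠ 0) :
    relProb w' x x' * ⟪relLogLossGrad w x x' true, w'⟫ +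
        (1 - relProb w' x x') * ⟪relLogLossGrad w x x' false, w'⟫ =
      -(relWeight w w' x x' * (relProb w' x x' - relProb w x x') ^ 2) := by
  simp only [inner_relLogLossGrad, relProb, relWeight, if_true, Bool.false_eq_true, if_false]
  field_simp
  ring

theorem expected_inner_relLogLossGrad_sub {w w' x x' : E} (hx : ⟪w, x⟫ ≠ 0)
    (hx' : ⟪w, x'⟫ ≠ 0) (hsum : ⟪w, x⟫ + ⟪w, x'⟫ ≠ 0) (hsum' : ⟪w', x⟫ + ⟪w', x'⟫ ≠ 0) :
    relProb w' x x' * ⟪relLogLossGrad w x x' true, w - w'⟫ +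
        (1 - relProb w' x x') * ⟪relLogLossGrad w x x' false, w - w'⟫ =
      relWeight w w' x x' * (relProb w' x x' - relProb w x x') ^ 2 := by
  have h := expected_inner_relLogLossGrad hx hx' hsum hsum'
  simp only [inner_sub_right, inner_relLogLossGrad_self hx hx' hsum] at h ⊢
  linarith

end RelativeRegression

/-- Expected gradient inner product: `E[∇_t · w*] = -Z_t (p_t(w*) - p_t(w_t))²`, and
equivalently `E[∇_t · (w_t - w*)] = Z_t (p_t(w*) - p_t(w_t))² ≥ 0`. -/
theorem expected_grad_inner {d : ℕ}
    (x x' wt wstar : EuclideanSpace ℝ (Fin d))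
    (hwx : 0 < ⟪wt, x⟫) (hwx' : 0 < ⟪wt, x'⟫)
    (hwsx : 0 < ⟪wstar, x⟫) (hwsx' : 0 < ⟪wstar, x'⟫)
    (p pstar : ℝ)
    (hp : p = ⟪wt, x⟫ / (⟪wt, x⟫ + ⟪wt, x'⟫))
    (hpstar : pstar = ⟪wstar, x⟫ / (⟪wstar, x⟫ + ⟪wstar, x'⟫))
    (g : Bool → EuclideanSpace ℝ (Fin d))
    (hg : ∀ y, g y = (⟪wt, x⟫ + ⟪wt, x'⟫)⁻¹ • (x + x') -
        (if y then (⟪wt, x⟫)⁻¹ • x else (⟪wt, x'⟫)⁻¹ • x'))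
    (Z : ℝ)
    (hZ : Z = (⟪wt, x⟫ + ⟪wt, x'⟫) * (⟪wstar, x⟫ + ⟪wstar, x'⟫) /
        (⟪wt, x⟫ * ⟪wt, x'⟫)) :
    pstar * ⟪g true, wstar⟫ + (1 - pstar) * ⟪g false, wstar⟫ =
        -(Z * (pstar - p) ^ 2) ∧
    pstar * ⟪g true, wt - wstar⟫ + (1 - pstar) * ⟪g false, wt - wstar⟫ =
        Z * (pstar - p) ^ 2 ∧
    0 ≤ Z * (pstar - p) ^ 2 := by
  obtain rfl : g = relLogLossGrad wt x x' := funext hg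
  obtain rfl : p = relProb wt x x' := hp
  obtain rfl : pstar = relProb wstar x x' := hpstar
  obtain rfl : Z = relWeight wt wstar x x' := hZ
  have hsum : 0 < ⟪wt, x⟫ + ⟪wt, x'⟫ := by positivity
  have hsum' : 0 < ⟪wstar, x⟫ + ⟪wstar, x'⟫ := by positivity
  exact ⟨expected_inner_relLogLossGrad hwx.ne' hwx'.ne' hsum.ne' hsum'.ne',
    expected_inner_relLogLossGrad_sub hwx.ne' hwx'.ne' hsum.ne' hsum'.ne',
    mul_nonneg (relWeight_nonneg hwx hwx' hsum'.le) (sq_nonneg _)⟩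
end
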